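/- Let A be a symmetric positive semidefinite n×n real matrix, b ∈ ℝⁿ, f(x) = (1/2)⟨Ax, x⟩ − ⟨b, x⟩, and let S ⊆ ℝⁿ be a nonempty convex compact set. Let L₁ = max_{i,j} |A_{ij}| and R₁ = max_{x,y ∈ S} ‖x − y‖₁. Let x* minimize f over S. Consider the Frank–Wolfe iterates: x¹ ∈ S, and for k ≥ 1, y^k ∈ S satisfies ⟨∇f(x^k), y^k⟩ ≤ ⟨∇f(x^k), z⟩ for all z ∈ S, and x^{k+1} = (1 − γ_k) x^k + γ_k y^k with γ_k = 2/(k+1). Then for every N ≥ 2, f(x^N) − f(x*) ≤ 2 L₁ R₁² / (N + 1). -/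

import Mathlib

/-!
For a convex quadratic the Taylor expansion along a Frank–Wolfe step is exact: with
`d = y - x` and `g = ∇f(x)`, `f(x + γ d) = f(x) + γ ⟨g, d⟩ + γ²/2 ⟨A d, d⟩`. The linear
minimisation gives `⟨g, d⟩ ≤ ⟨g, x* - x⟩ ≤ f(x*) - f(x)` by convexity, and
`⟨A d, d⟩ ≤ L₁ ‖d‖₁² ≤ L₁ R₁²`. Hence `h_k = f(x^k) - f(x*)` satisfies
`h_{k+1} ≤ (1 - γ_k) h_k + γ_k² L₁ R₁² / 2`, and induction gives `h_k ≤ 2 L₁ R₁² / (k + 1)`.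
-/

open Matrix

section QuadraticObjective

variable {ι : Type*} [Fintype ι] {A : Matrix ι ι ℝ}

noncomputable def quadraticObjective (A : Matrix ι ι ℝ) (b x : ι → ℝ) : ℝ :=
  1 / 2 * (A *ᵥ x ⬝ᵥ x) - b ⬝ᵥ x

theorem quadraticObjective_add (hA : A.IsSymm) (b u d : ι → ℝ) :
    quadraticObjective A b (u + d) =
      quadraticObjective A b u + (A *ᵥ u - b) ⬝ᵥ d + 1 / 2 * (A *ᵥ d ⬝ᵥ d) := by
  have hsymm : A *ᵥ d ⬝ᵥ u = A *ᵥ u ⬝ᵥ d := by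
    rw [dotProduct_comm, dotProduct_mulVec, ← mulVec_transpose, hA.eq]
  simp only [quadraticObjective, mulVec_add, add_dotProduct, dotProduct_add, sub_dotProduct,
    hsymm]
  ring

theorem gradient_dotProduct_le_sub (hA : A.PosSemidef) (b u z : ι → ℝ) :
    (A *ᵥ u - b) ⬝ᵥ (z - u) ≤ quadraticObjective A b z - quadraticObjective A b u := by
  have hcurv : 0 ≤ A *ᵥ (z - u) ⬝ᵥ (z - u) := by
    simpa [dotProduct_comm] using hA.dotProduct_mulVec_nonneg (z - u)
  have hexp := quadraticObjective_add (isHermitian_iff_isSymm.mp hA.1) b u (z - u)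
  rw [add_sub_cancel] at hexp
  linarith

theorem mulVec_dotProduct_self_le {L : ℝ} (hL : ∀ i j, |A i j| ≤ L) (d : ι → ℝ) :
    A *ᵥ d ⬝ᵥ d ≤ L * (∑ i, |d i|) ^ 2 := by
  calc A *ᵥ d ⬝ᵥ d = ∑ i, ∑ j, A i j * d j * d i := by
        simp only [dotProduct, mulVec, Finset.sum_mul]
    _ ≤ ∑ i, ∑ j, L * |d j| * |d i| := by
        refine Finset.sum_le_sum fun i _ => Finset.sum_le_sum fun j _ => ?_
        calc A i j * d j * d i ≤ |A i j * d j * d i| := le_abs_self _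
          _ = |A i j| * |d j| * |d i| := by rw [abs_mul, abs_mul]
          _ ≤ L * |d j| * |d i| := by gcongr; exact hL i j
    _ = L * (∑ i, |d i|) ^ 2 := by
        rw [sq, Finset.sum_mul_sum, Finset.mul_sum]
        exact Finset.sum_congr rfl fun i _ => by
          rw [Finset.mul_sum]; exact Finset.sum_congr rfl fun j _ => by ring

theorem quadraticObjective_frankWolfe_step (hA : A.PosSemidef) {b u v z : ι → ℝ}
    (hv : (A *ᵥ u - b) ⬝ᵥ v ≤ (A *ᵥ u - b) ⬝ᵥ z) {γ : ℝ} (hγ : 0 ≤ γ) :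
    quadraticObjective A b (u + γ • (v - u)) - quadraticObjective A b z ≤
      (1 - γ) * (quadraticObjective A b u - quadraticObjective A b z) +
        γ ^ 2 / 2 * (A *ᵥ (v - u) ⬝ᵥ (v - u)) := by
  have hexp := quadraticObjective_add (isHermitian_iff_isSymm.mp hA.1) b u (γ • (v - u))
  simp only [mulVec_smul, dotProduct_smul, smul_dotProduct, smul_eq_mul] at hexp
  have hdescent : (A *ᵥ u - b) ⬝ᵥ (v - u) ≤
      quadraticObjective A b z - quadraticObjective A b u := by
    refine le_trans ?_ (gradient_dotProduct_le_sub hA b u z)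
    simp only [dotProduct_sub]
    linarith
  rw [hexp]
  linarith [mul_le_mul_of_nonneg_left hdescent hγ]

end QuadraticObjective

theorem frankWolfe_iterate_mem {E : Type*} [AddCommGroup E] [Module ℝ E] {S : Set E}
    (hS : Convex ℝ S) {x y : ℕ → E} (hx1 : x 1 ∈ S) (hy : ∀ k, 1 ≤ k → y k ∈ S)
    (hupd : ∀ k, 1 ≤ k →
      x (k + 1) = (1 - 2 / ((k : ℝ) + 1)) • x k + (2 / ((k : ℝ) + 1)) • y k) :
    ∀ k, 1 ≤ k → x k ∈ S := by
  intro k hk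
  induction k, hk using Nat.le_induction with
  | base => exact hx1
  | succ k hk ih =>
    have hk1 : (1 : ℝ) ≤ k := by exact_mod_cast hk
    have hγ : 2 / ((k : ℝ) + 1) ≤ 1 := by rw [div_le_one (by linarith)]; linarith
    rw [hupd k hk]
    exact hS ih (hy k hk) (by linarith) (by positivity) (by ring)

theorem le_of_frankWolfe_recursion {h : ℕ → ℝ} {C : ℝ} (hC : 0 ≤ C)
    (hrec : ∀ k, 1 ≤ k →
      h (k + 1) ≤ (1 - 2 / ((k : ℝ) + 1)) * h k + (2 / ((k : ℝ) + 1)) ^ 2 / 2 * C) :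
    ∀ N, 2 ≤ N → h N ≤ 2 * C / ((N : ℝ) + 1) := by
  intro N hN
  induction N, hN using Nat.le_induction with
  | base =>
    have h2 := hrec 1 le_rfl
    norm_num at h2 ⊢
    linarith
  | succ k hk ih =>
    have hk2 : (2 : ℝ) ≤ k := by exact_mod_cast hk
    have hγ : 0 ≤ 1 - 2 / ((k : ℝ) + 1) := by
      rw [sub_nonneg, div_le_one (by linarith)]; linarith
    have hslack : (1 - 2 / ((k : ℝ) + 1)) * (2 * C / ((k : ℝ) + 1)) +
        (2 / ((k : ℝ) + 1)) ^ 2 / 2 * C + 2 * C / (((k : ℝ) + 1) ^ 2 * ((k : ℝ) + 2)) =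
        2 * C / ((k : ℝ) + 2) := by
      field_simp
      ring
    have hslack_nonneg : 0 ≤ 2 * C / (((k : ℝ) + 1) ^ 2 * ((k : ℝ) + 2)) := by positivity
    push_cast
    rw [add_assoc, one_add_one_eq_two]
    linarith [hrec k (by omega), mul_le_mul_of_nonneg_left ih hγ]

theorem stmt4_general {n : ℕ} (A : Matrix (Fin n) (Fin n) ℝ) (hA : A.PosSemidef)
    (b : Fin n → ℝ) (f : (Fin n → ℝ) → ℝ)
    (hf : ∀ x, f x = (1 / 2) * (∑ i, A.mulVec x i * x i) - ∑ i, b i * x i)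
    (S : Set (Fin n → ℝ)) (hSconv : Convex ℝ S)
    (L₁ : ℝ) (hL₁ : IsGreatest {v | ∃ i j, v = |A i j|} L₁)
    (R₁ : ℝ) (hR₁ : IsGreatest {v | ∃ x ∈ S, ∃ y ∈ S, v = ∑ i, |x i - y i|} R₁)
    (xstar : Fin n → ℝ) (hxstar : xstar ∈ S)
    (x y : ℕ → Fin n → ℝ) (hx1 : x 1 ∈ S)
    (hy : ∀ k, 1 ≤ k → y k ∈ S ∧ ∀ z ∈ S,
      (∑ i, (A.mulVec (x k) i - b i) * y k i) ≤ ∑ i, (A.mulVec (x k) i - b i) * z i)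
    (hupd : ∀ k, 1 ≤ k →
      x (k + 1) = (1 - 2 / ((k : ℝ) + 1)) • x k + (2 / ((k : ℝ) + 1)) • y k)
    (N : ℕ) (hN : 2 ≤ N) :
    f (x N) - f xstar ≤ 2 * L₁ * R₁ ^ 2 / ((N : ℝ) + 1) := by
  have hfq : f = quadraticObjective A b := funext hf
  have hxS := frankWolfe_iterate_mem hSconv hx1 (fun k hk => (hy k hk).1) hupd
  have hL₁_nonneg : 0 ≤ L₁ := by obtain ⟨i, j, rfl⟩ := hL₁.1; positivity
  rw [mul_assoc]
  refine le_of_frankWolfe_recursion (h := fun k => f (x k) - f xstar) (by positivity)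
    (fun k hk => ?_) N hN
  have hcurv : A *ᵥ (y k - x k) ⬝ᵥ (y k - x k) ≤ L₁ * R₁ ^ 2 := by
    have hdiam : ∑ i, |(y k - x k) i| ≤ R₁ := hR₁.2 ⟨y k, (hy k hk).1, x k, hxS k hk, rfl⟩
    calc A *ᵥ (y k - x k) ⬝ᵥ (y k - x k) ≤ L₁ * (∑ i, |(y k - x k) i|) ^ 2 :=
          mulVec_dotProduct_self_le (fun i j => hL₁.2 ⟨i, j, rfl⟩) _
      _ ≤ L₁ * R₁ ^ 2 := by gcongr
  have hstep : x (k + 1) = x k + (2 / ((k : ℝ) + 1)) • (y k - x k) := by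
    rw [hupd k hk]; module
  simp only [hstep, hfq]
  grw [quadraticObjective_frankWolfe_step hA ((hy k hk).2 xstar hxstar) (by positivity), hcurv]

/-- Frank–Wolfe convergence for a quadratic `f x = (1/2)⟨Ax,x⟩ - ⟨b,x⟩` (`A` symmetric PSD)
on a nonempty convex compact `S`, with `L₁ = max_{i,j}|A_{ij}|`,
`R₁ = max_{x,y ∈ S}‖x-y‖₁`, and steps `γ_k = 2/(k+1)`:
for every `N ≥ 2`, `f(x^N) - f(x*) ≤ 2 L₁ R₁² / (N+1)`. -/
theorem stmt4 {n : ℕ} (A : Matrix (Fin n) (Fin n) ℝ) (hA : A.PosSemidef)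
    (b : Fin n → ℝ) (f : (Fin n → ℝ) → ℝ)
    (hf : ∀ x, f x = (1 / 2) * (∑ i, A.mulVec x i * x i) - ∑ i, b i * x i)
    (S : Set (Fin n → ℝ)) (hSne : S.Nonempty) (hSconv : Convex ℝ S)
    (hScomp : IsCompact S)
    (L₁ : ℝ) (hL₁ : IsGreatest {v | ∃ i j, v = |A i j|} L₁)
    (R₁ : ℝ) (hR₁ : IsGreatest {v | ∃ x ∈ S, ∃ y ∈ S, v = ∑ i, |x i - y i|} R₁)
    (xstar : Fin n → ℝ) (hxstar : xstar ∈ S) (hmin : ∀ z ∈ S, f xstar ≤ f z)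
    (x y : ℕ → Fin n → ℝ) (hx1 : x 1 ∈ S)
    (hy : ∀ k, 1 ≤ k → y k ∈ S ∧ ∀ z ∈ S,
      (∑ i, (A.mulVec (x k) i - b i) * y k i) ≤ ∑ i, (A.mulVec (x k) i - b i) * z i)
    (hupd : ∀ k, 1 ≤ k →
      x (k + 1) = (1 - 2 / ((k : ℝ) + 1)) • x k + (2 / ((k : ℝ) + 1)) • y k)
    (N : ℕ) (hN : 2 ≤ N) :
    f (x N) - f xstar ≤ 2 * L₁ * R₁ ^ 2 / ((N : ℝ) + 1) :=
  stmt4_general A hA b f hf S hSconv L₁ hL₁ R₁ hR₁ xstar hxstar x y hx1 hy hupd N hN
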